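/- Let p be a prime and A any nonzero ideal of O = Z[ξ_p], regarded as a Z[G]-module via multiplication by ξ_p for a generator of the cyclic group G of order p. Then A ⊗ F_p is isomorphic as an F_p[G]-module to N_{p−1}, the unipotent Jordan block of size p−1. -/

import Mathlib

open scoped TensorProduct

/-- The unipotent Jordan block of size `q` over `𝔽ₚ`. -/
def jordanBlock (p q : ℕ) : Matrix (Fin q) (Fin q) (ZMod p) :=
  Matrix.of fun i j => if j = i then 1 else if (i : ℕ) + 1 = (j : ℕ) then 1 else 0

/-!
Put `π = ζ - 1`, so that `φ - 1` is multiplication by `π` on `A`, and recall that `p` and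
`π ^ (p - 1)` are associated in `O`. As `O = ℤ[ζ]` is free of rank `p - 1` over `ℤ`, so is `A`,
and `V = 𝔽ₚ ⊗ A` has dimension `p - 1`. The nilpotent part `t = (φ - 1) ⊗ 𝔽ₚ` satisfies
`t ^ (p - 1) = 0` since `π ^ (p - 1) ∈ pO`. If `t ^ (p - 2)` vanished, then
`π ^ (p - 2) A ⊆ pA = π ^ (p - 1) A`, so `A = πA`; then `t` would be both surjective and
nilpotent, forcing `V = 0`. So `t` has a cyclic vector, i.e. it is a single nilpotent Jordan block.
-/

open Polynomial in
theorem IsPrimitiveRoot.natDegree_minpoly_int {O : Type*} [CommRing O] [IsDomain O] [CharZero O]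
    {ζ : O} {n : ℕ} (hζ : IsPrimitiveRoot ζ n) (hn : 0 < n) :
    (minpoly ℤ ζ).natDegree = n.totient := by
  refine le_antisymm ?_ hζ.totient_le_degree_minpoly
  have hdvd : minpoly ℤ ζ ∣ cyclotomic n ℤ := by
    refine minpoly.isIntegrallyClosed_dvd (hζ.isIntegral hn) ?_
    simpa [aeval_def, eval₂_eq_eval_map, IsRoot.def] using hζ.isRoot_cyclotomic hn
  simpa only [natDegree_cyclotomic] using natDegree_le_of_dvd hdvd (cyclotomic_ne_zero n ℤ)

theorem IsPrimitiveRoot.finrank_baseChange_ideal {O : Type*} [CommRing O] [IsDomain O]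
    [CharZero O] {ζ : O} {n : ℕ} (hζ : IsPrimitiveRoot ζ n) (hn : 0 < n)
    (hO : Algebra.adjoin ℤ {ζ} = ⊤) {A : Ideal O} (hA : A ≠ ⊥)
    (R : Type*) [CommRing R] [Nontrivial R] :
    Module.finrank R (R ⊗[ℤ] A) = n.totient := by
  let pb := PowerBasis.ofAdjoinEqTop' (hζ.isIntegral hn) hO
  have : Module.Finite ℤ O := pb.finite
  rw [Module.finrank_baseChange, ← hζ.natDegree_minpoly_int hn,
    ← PowerBasis.ofAdjoinEqTop'_dim (hζ.isIntegral hn) hO, ← pb.finrank]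
  exact Ideal.finrank_eq_finrank pb.basis A hA

theorem IsPrimitiveRoot.associated_sub_one_pow_prime {O : Type*} [CommRing O] [IsDomain O]
    {ζ : O} {p : ℕ} (hp : p.Prime) (hζ : IsPrimitiveRoot ζ p) :
    Associated ((ζ - 1) ^ (p - 1)) (p : O) := by
  obtain ⟨n, rfl⟩ : ∃ n, p = n + 1 := ⟨p - 1, (Nat.sub_add_cancel hp.one_le).symm⟩
  have hcop : ∀ k ∈ Finset.range n, (k + 1).Coprime (n + 1) := fun k hk =>
    (hp.coprime_iff_not_dvd.2
      (Nat.not_dvd_of_pos_of_lt k.succ_pos (by simpa using Finset.mem_range.1 hk))).symm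
  have hprod : Associated ((ζ - 1) ^ n) (∏ k ∈ Finset.range n, (ζ ^ (k + 1) - 1)) := by
    rw [← Finset.card_range n, ← Finset.prod_const, Finset.card_range]
    exact Associated.prod _ _ _ fun k hk =>
      hζ.associated_sub_one_pow_sub_one_of_coprime (hcop k hk)
  have hsign : Associated (∏ k ∈ Finset.range n, (ζ ^ (k + 1) - 1)) ((n + 1 : ℕ) : O) := by
    rw [Nat.cast_succ, ← hζ.prod_pow_sub_one_eq_order]
    exact ((associated_isUnit_mul_left_iff ((isUnit_neg_one (α := O)).pow n)).2 (.refl _)).symm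
  simpa using hprod.trans hsign

theorem ZMod.one_tmul_eq_zero_iff {M : Type*} [AddCommGroup M] (n : ℕ) (x : M) :
    (1 : ZMod n) ⊗ₜ[ℤ] x = 0 ↔ ∃ y : M, x = (n : ℤ) • y := by
  let e := (TensorProduct.congr (Int.quotientSpanNatEquivZMod n).toIntAlgEquiv.symm.toLinearEquiv
      (LinearEquiv.refl ℤ M)).trans (TensorProduct.quotTensorEquivQuotSMul M _)
  have he : e (1 ⊗ₜ x) = Submodule.Quotient.mk x := by
    simp only [e, LinearEquiv.trans_apply, TensorProduct.congr_tmul, LinearEquiv.refl_apply,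
      AlgEquiv.toLinearEquiv_apply, map_one, TensorProduct.quotTensorEquivQuotSMul_mk_one_tmul]
  rw [← e.map_eq_zero_iff, he, Submodule.Quotient.mk_eq_zero, Submodule.ideal_span_singleton_smul,
    Submodule.mem_smul_pointwise_iff_exists]
  simp [eq_comm]

namespace Module

variable {O M : Type*} [CommRing O] [AddCommGroup M] [Module O M]

theorem baseChange_toModuleEnd_pow_eq_zero {p k : ℕ} {π : O} (h : (p : O) ∣ π ^ k) :
    (toModuleEnd ℤ (S := O) M π).baseChange (ZMod p) ^ k = 0 := by
  obtain ⟨w, hw⟩ := h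
  have hπk : toModuleEnd ℤ (S := O) M (π ^ k) = (p : ℤ) • toModuleEnd ℤ (S := O) M w := by
    ext x
    simp [hw, mul_smul, Nat.cast_smul_eq_nsmul]
  rw [← LinearMap.baseChange_pow, ← map_pow, hπk, LinearMap.baseChange_smul]
  refine LinearMap.ext fun v => ?_
  rw [LinearMap.smul_apply, ← algebraMap_smul (ZMod p)]
  simp

theorem toModuleEnd_surjective_of_baseChange_pow_eq_zero [IsDomain O] [IsTorsionFree O M]
    {p k : ℕ} {π : O} (hπ : π ≠ 0) (hp : π ^ (k + 1) ∣ p)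
    (h : (toModuleEnd ℤ (S := O) M π).baseChange (ZMod p) ^ k = 0) :
    Function.Surjective (toModuleEnd ℤ (S := O) M π) := by
  obtain ⟨u, hu⟩ := hp
  intro x
  obtain ⟨y, hy⟩ : ∃ y : M, π ^ k • x = (p : ℤ) • y := by
    rw [← ZMod.one_tmul_eq_zero_iff]
    change (1 : ZMod p) ⊗ₜ[ℤ] toModuleEnd ℤ (S := O) M (π ^ k) x = 0
    rw [map_pow, ← LinearMap.baseChange_tmul, LinearMap.baseChange_pow, h, LinearMap.zero_apply]
  refine ⟨u • y, smul_right_injective M (pow_ne_zero k hπ) ?_⟩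
  change π ^ k • π • u • y = π ^ k • x
  rw [smul_smul, smul_smul, ← pow_succ, ← hu, hy, Nat.cast_smul_eq_nsmul, natCast_zsmul]

theorem baseChange_toModuleEnd_pow_pred_ne_zero [IsDomain O] [IsTorsionFree O M]
    {p n : ℕ} [Nontrivial (ZMod p ⊗[ℤ] M)] {π : O} (hπ : π ≠ 0) (hn : n ≠ 0)
    (hπp : Associated (π ^ n) (p : O)) :
    (toModuleEnd ℤ (S := O) M π).baseChange (ZMod p) ^ (n - 1) ≠ 0 := by
  intro h
  have hsurj := toModuleEnd_surjective_of_baseChange_pow_eq_zero hπ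
    (by rw [Nat.sub_add_cancel (Nat.one_le_iff_ne_zero.2 hn)]; exact hπp.dvd) h
  have hsurj_pow := (LinearMap.lTensor_surjective (ZMod p) hsurj).iterate n
  rw [← LinearMap.baseChange_eq_ltensor, ← End.coe_pow,
    baseChange_toModuleEnd_pow_eq_zero hπp.symm.dvd] at hsurj_pow
  obtain ⟨x, hx⟩ := exists_ne (0 : ZMod p ⊗[ℤ] M)
  obtain ⟨y, hy⟩ := hsurj_pow x
  exact hx hy.symm

end Module

namespace Module.End

variable {K V : Type*} [Field K] [AddCommGroup V] [Module K V]

theorem linearIndependent_pow_apply {t : End K V} {n : ℕ} {v : V} (hn : (t ^ n) v = 0)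
    (hv : (t ^ (n - 1)) v ≠ 0) : LinearIndependent K fun i : Fin n => (t ^ (i : ℕ)) v := by
  rw [Fintype.linearIndependent_iff]
  intro c hc i
  induction i using WellFoundedLT.induction with
  | _ i ih =>
  -- applying `t ^ (n - 1 - i)` kills every term of index above `i`
  have hsum := congrArg (t ^ (n - 1 - i)) hc
  rw [map_sum, Finset.sum_eq_single i, map_smul, ← mul_apply, ← pow_add,
    Nat.sub_add_cancel (by omega)] at hsum
  · simpa [hv] using hsum
  · intro j _ hji
    rcases lt_or_gt_of_ne hji with hj | hj
    · simp [ih j hj]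
    · rw [map_smul, ← mul_apply, ← pow_add, pow_map_zero_of_le (by omega) hn, smul_zero]
  · simp

theorem exists_basis_toMatrix_eq {t : End K V} {n : ℕ} (hdim : finrank K V = n)
    (h₁ : t ^ n = 0) (h₂ : t ^ (n - 1) ≠ 0) :
    ∃ b : Basis (Fin n) K V,
      ∀ i j, LinearMap.toMatrix b b t i j = if (i : ℕ) + 1 = j then 1 else 0 := by
  obtain ⟨v, hv⟩ : ∃ v, (t ^ (n - 1)) v ≠ 0 := by
    by_contra! h
    exact h₂ (LinearMap.ext h)
  obtain ⟨m, rfl⟩ : ∃ m, n = m + 1 := by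
    refine Nat.exists_eq_add_one.2 (Nat.pos_of_ne_zero fun h => hv ?_)
    subst h
    simpa using LinearMap.congr_fun h₁ v
  have hli := (linearIndependent_pow_apply (LinearMap.congr_fun h₁ v) hv).comp _ Fin.rev_injective
  let b := basisOfLinearIndependentOfCardEqFinrank hli (by simp [hdim])
  have hb : ∀ i, b i = (t ^ (m - i : ℕ)) v := fun i => by
    simp [b, coe_basisOfLinearIndependentOfCardEqFinrank, Fin.val_rev]
  refine ⟨b, fun i j => ?_⟩
  rw [LinearMap.toMatrix_apply]
  cases j using Fin.cases with
  | zero =>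
    rw [hb, ← mul_apply, ← pow_succ', Fin.val_zero, Nat.sub_zero]
    simp [h₁]
  | succ j =>
    have htb : t (b j.succ) = b j.castSucc := by
      rw [hb, hb, ← mul_apply, ← pow_succ', Fin.val_succ, Fin.val_castSucc]
      congr 2
      omega
    rw [htb, b.repr_self, Finsupp.single_apply]
    refine if_congr ?_ rfl rfl
    simp only [Fin.ext_iff, Fin.val_castSucc, Fin.val_succ]
    omega

theorem exists_linearEquiv_jordanBlock {p n : ℕ} [Fact p.Prime] {W : Type*} [AddCommGroup W]
    [Module (ZMod p) W] (hdim : finrank (ZMod p) W = n) {t : End (ZMod p) W}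
    (h₁ : t ^ n = 0) (h₂ : t ^ (n - 1) ≠ 0) :
    ∃ e : W ≃ₗ[ZMod p] (Fin n → ZMod p),
      ∀ w, e (t w + w) = Matrix.toLin' (jordanBlock p n) (e w) := by
  obtain ⟨b, hb⟩ := exists_basis_toMatrix_eq hdim h₁ h₂
  have hJ : LinearMap.toMatrix b b (t + 1) = jordanBlock p n := by
    ext i j
    rw [map_add, Matrix.add_apply, hb, LinearMap.toMatrix_one, Matrix.one_apply, jordanBlock,
      Matrix.of_apply]
    rcases eq_or_ne i j with rfl | hij
    · simp
    · simp [hij, hij.symm]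
  refine ⟨b.equivFun, fun w => ?_⟩
  simpa [hJ] using (LinearMap.toMatrix_mulVec_repr b b (t + 1) w).symm

end Module.End

/-- Lemma: let `O = ℤ[ξ_p]` (characteristic-zero domain generated over `ℤ` by a
primitive `p`-th root of unity `ζ`) and `A` a nonzero ideal of `O`, regarded as a
`ℤ[G]`-module where a generator `φ` of the cyclic group `G` of order `p` acts by
multiplication by `ζ`.  Then `A ⊗ 𝔽ₚ` is isomorphic as an `𝔽ₚ[G]`-module to
`N_{p-1}`, the unipotent Jordan block of size `p - 1`. -/
theorem tensor_ideal_isJordanBlock_pred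
    (p : ℕ) (hp : p.Prime)
    (O : Type) [CommRing O] [IsDomain O] [CharZero O]
    (ζ : O) (hζ : IsPrimitiveRoot ζ p) (hO : Algebra.adjoin ℤ {ζ} = ⊤)
    (A : Ideal O) (hA : A ≠ ⊥)
    (φ : A →ₗ[ℤ] A) (hφ : ∀ x : A, (φ x : O) = ζ * (x : O)) :
    ∃ e : (ZMod p ⊗[ℤ] A) ≃ₗ[ZMod p] (Fin (p - 1) → ZMod p),
      ∀ v, e (LinearMap.baseChange (ZMod p) φ v) =
        Matrix.toLin' (jordanBlock p (p - 1)) (e v) := by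
  have : Fact p.Prime := ⟨hp⟩
  have hπ : ζ - 1 ≠ 0 := sub_ne_zero.2 (hζ.ne_one hp.one_lt)
  have hφπ : φ = Module.toModuleEnd ℤ (S := O) A (ζ - 1) + 1 := by
    ext x
    simp [hφ, sub_mul]
  have hdim : Module.finrank (ZMod p) (ZMod p ⊗[ℤ] A) = p - 1 := by
    rw [hζ.finrank_baseChange_ideal hp.pos hO hA, Nat.totient_prime hp]
  have : Nontrivial (ZMod p ⊗[ℤ] A) :=
    Module.nontrivial_of_finrank_pos (hdim ▸ Nat.sub_pos_of_lt hp.one_lt)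
  have hassoc := hζ.associated_sub_one_pow_prime hp
  obtain ⟨e, he⟩ := Module.End.exists_linearEquiv_jordanBlock hdim
    (Module.baseChange_toModuleEnd_pow_eq_zero hassoc.symm.dvd)
    (Module.baseChange_toModuleEnd_pow_pred_ne_zero hπ (Nat.sub_ne_zero_of_lt hp.one_lt) hassoc)
  refine ⟨e, fun v => ?_⟩
  rw [hφπ, LinearMap.baseChange_add, LinearMap.baseChange_one]
  exact he v
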